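/- arXiv:1112.0934 — 3 statements merged into one kernel-verified Lean document; each statement's English description precedes it below -/
import Mathlib

section
/- Let a,b>0 and let (δ_n) satisfy δ_{n+1} = (1 - (a+b)/n + ε_n)·δ_n with |ε_n| ≤ C/n². Then δ_n = O(n^{-(a+b)}): there exists K such that |δ_n| ≤ K·n^{-(a+b)} for all n ≥ n₀. -/
/-!
With `s = a + b`, the weighted sequence `gₙ = |δₙ| nˢ` satisfies `gₙ₊₁ ≤ exp (C / n²) gₙ` for large `n`,
because `|1 - s/n + εₙ| ≤ exp (-s/n + C/n²)` and `(1 + 1/n)ˢ ≤ exp (s/n)`. Since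
`C / n² ≤ 2C/n - 2C/(n+1)`, the sequence `gₙ exp (2C/n)` is eventually nonincreasing, so `g` is bounded.
-/

open Real Filter

theorem abs_one_sub_add_le_exp {x e c : ℝ} (hx : x ≤ 1) (he : |e| ≤ c) :
    |1 - x + e| ≤ exp (-x + c) :=
  calc |1 - x + e| ≤ |1 - x| + |e| := abs_add_le _ _
    _ ≤ (-x + c) + 1 := by rw [abs_of_nonneg (by linarith)]; linarith
    _ ≤ exp (-x + c) := add_one_le_exp _

theorem one_add_inv_rpow_le_exp {x s : ℝ} (hx : 0 < x) (hs : 0 ≤ s) :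
    (1 + x⁻¹) ^ s ≤ exp (s / x) :=
  calc (1 + x⁻¹) ^ s ≤ exp x⁻¹ ^ s :=
        rpow_le_rpow (by positivity) (by linarith [add_one_le_exp x⁻¹]) hs
    _ = exp (s / x) := by rw [← exp_mul, div_eq_mul_inv, mul_comm]

theorem abs_mul_mul_add_one_rpow_le {s C x e d : ℝ} (hs : 0 ≤ s) (hsx : s ≤ x) (hx : 0 < x)
    (he : |e| ≤ C / x ^ 2) :
    |(1 - s / x + e) * d| * (x + 1) ^ s ≤ exp (C / x ^ 2) * (|d| * x ^ s) := by
  have hfactor : (x + 1) ^ s = (1 + x⁻¹) ^ s * x ^ s := by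
    rw [← mul_rpow (by positivity) hx.le, add_mul, inv_mul_cancel₀ hx.ne', one_mul, add_comm]
  have hsx' : s / x ≤ 1 := (div_le_one hx).2 hsx
  calc |(1 - s / x + e) * d| * (x + 1) ^ s
      = (|1 - s / x + e| * (1 + x⁻¹) ^ s) * (|d| * x ^ s) := by rw [abs_mul, hfactor]; ring
    _ ≤ (exp (-(s / x) + C / x ^ 2) * exp (s / x)) * (|d| * x ^ s) := by
        gcongr
        · exact abs_one_sub_add_le_exp hsx' he
        · exact one_add_inv_rpow_le_exp hx hs
    _ = exp (C / x ^ 2) * (|d| * x ^ s) := by rw [← exp_add]; ring_nf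

theorem div_sq_le_sub_div_add_one {C x : ℝ} (hC : 0 ≤ C) (hx : 1 ≤ x) :
    C / x ^ 2 ≤ 2 * C / x - 2 * C / (x + 1) := by
  have hsub : 2 * C / x - 2 * C / (x + 1) = 2 * C / (x * (x + 1)) := by
    field_simp; ring
  rw [hsub, div_le_div_iff₀ (by positivity) (by positivity)]
  nlinarith [mul_nonneg hC (mul_nonneg (by linarith : (0 : ℝ) ≤ x) (by linarith : (0 : ℝ) ≤ x - 1))]

theorem bddAbove_range_of_succ_le_exp_div_sq {g : ℕ → ℝ} {C : ℝ} (hC : 0 ≤ C)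
    (hg : ∀ n, 0 ≤ g n) (hsucc : ∀ᶠ n : ℕ in atTop, g (n + 1) ≤ exp (C / n ^ 2) * g n) :
    BddAbove (Set.range g) := by
  set u : ℕ → ℝ := fun n => g n * exp (2 * C / n)
  obtain ⟨N, hN⟩ := eventually_atTop.1 (hsucc.and (eventually_ge_atTop 1))
  have hanti : AntitoneOn u {n | N ≤ n} := by
    refine antitoneOn_nat_Ici_of_succ_le fun n hn => ?_
    obtain ⟨hgn, hn1⟩ := hN n hn
    have hx : (1 : ℝ) ≤ n := by exact_mod_cast hn1
    calc u (n + 1) ≤ exp (C / n ^ 2) * g n * exp (2 * C / (n + 1)) := by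
          simp only [u, Nat.cast_succ]; gcongr
      _ ≤ exp (2 * C / n - 2 * C / (n + 1)) * g n * exp (2 * C / (n + 1)) := by
          gcongr
          · exact hg n
          · exact div_sq_le_sub_div_add_one hC hx
      _ = u n := by simp only [u]; rw [exp_sub]; field_simp
  refine (isBoundedUnder_of_eventually_le (a := u N) ?_).bddAbove_range
  filter_upwards [eventually_ge_atTop N] with n hn
  calc g n ≤ u n := le_mul_of_one_le_right (hg n) (one_le_exp (by positivity))
    _ ≤ u N := hanti (le_refl N) hn hn

theorem stmt_4 (a b C : ℝ) (ha : 0 < a) (hb : 0 < b) (hC : 0 < C)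
    (n₀ : ℕ) (hn₀ : 1 ≤ n₀) (δ ε : ℕ → ℝ)
    (hrec : ∀ n, n₀ ≤ n → δ (n + 1) = (1 - (a + b) / n + ε n) * δ n)
    (hε : ∀ n, n₀ ≤ n → |ε n| ≤ C / (n : ℝ) ^ 2) :
    ∃ K : ℝ, ∀ n, n₀ ≤ n → |δ n| ≤ K * (n : ℝ) ^ (-(a + b)) := by
  set s := a + b
  have hs : 0 ≤ s := by positivity
  have hstep : ∀ᶠ n : ℕ in atTop,
      |δ (n + 1)| * ((n + 1 : ℕ) : ℝ) ^ s ≤ exp (C / n ^ 2) * (|δ n| * (n : ℝ) ^ s) := by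
    filter_upwards [eventually_ge_atTop n₀, eventually_ge_atTop ⌈s⌉₊] with n hn hns
    have hn1 : (0 : ℝ) < n := by exact_mod_cast hn₀.trans hn
    rw [hrec n hn, Nat.cast_succ]
    exact abs_mul_mul_add_one_rpow_le hs (Nat.ceil_le.1 hns) hn1 (hε n hn)
  obtain ⟨K, hK⟩ := bddAbove_range_of_succ_le_exp_div_sq (g := fun n => |δ n| * (n : ℝ) ^ s) hC.le
    (fun n => by positivity) hstep
  refine ⟨K, fun n hn => ?_⟩
  have hn1 : (0 : ℝ) < n := by exact_mod_cast hn₀.trans hn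
  calc |δ n| = |δ n| * (n : ℝ) ^ s * (n : ℝ) ^ (-s) := by
        rw [mul_assoc, ← rpow_add hn1, add_neg_cancel, rpow_zero, mul_one]
    _ ≤ K * (n : ℝ) ^ (-s) := by gcongr; exact hK ⟨n, rfl⟩
end

section
/- Let 0<p<1, 0<q<1, and consider the time-inhomogeneous Markov chain (Y_n) on states {1,0} with transition matrix A_n having P(1→1)=p_M(n) = (p(1-q)n+pq)/(1-p-q+2pq+p(1-q)n) and P(0→0)=p_m(n) = (p(1-q)n+pq-p-q+1)/(1-p-q+2pq+p(1-q)n). Then for any initial distribution, lim_{n→∞} P(Y_n = 1) = pq/(1-p-q+2pq). -/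
/-!
With `a = p(1-q)`, `c = 1-p-q+2pq` and `L = pq/c`, the recursion for `π_n` becomes
`π_{n+1} - L = (π_n - L) · n / (n + δ)` with `δ = c/a > 0`. For `ε = min δ 1`, Bernoulli's
inequality `(1 + 1/n)^ε ≤ 1 + δ/n` makes `n^ε |π_n - L|` non-increasing, so
`|π_n - L| = O(n^(-ε)) → 0`.
-/

open Filter Topology

lemma rpow_succ_mul_div_add_le {n ε δ : ℝ} (hn : 0 < n) (hε0 : 0 ≤ ε) (hε1 : ε ≤ 1) (hεδ : ε ≤ δ) :
    (n + 1) ^ ε * (n / (n + δ)) ≤ n ^ ε := by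
  have hδ : 0 < n + δ := by linarith
  have bernoulli : (1 + n⁻¹) ^ ε ≤ 1 + δ * n⁻¹ :=
    (rpow_one_add_le_one_add_mul_self (by linarith [inv_pos.2 hn]) hε0 hε1).trans
      (by gcongr)
  have hsplit : (n + 1) ^ ε = n ^ ε * (1 + n⁻¹) ^ ε := by
    rw [← Real.mul_rpow hn.le (by positivity), mul_add, mul_inv_cancel₀ hn.ne', mul_one]
  calc (n + 1) ^ ε * (n / (n + δ)) = n ^ ε * ((1 + n⁻¹) ^ ε * (n / (n + δ))) := by
        rw [hsplit, mul_assoc]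
    _ ≤ n ^ ε * ((1 + δ * n⁻¹) * (n / (n + δ))) := by gcongr
    _ = n ^ ε := by field_simp

lemma tendsto_zero_of_abs_succ_le_mul_div_add {δ : ℝ} (hδ : 0 < δ) {u : ℕ → ℝ}
    (hu : ∀ n, 1 ≤ n → |u (n + 1)| ≤ |u n| * (n / (n + δ))) :
    Tendsto u atTop (𝓝 0) := by
  set ε := min δ 1
  have hε : 0 < ε := lt_min hδ one_pos
  have hbound : ∀ n : ℕ, 1 ≤ n → (n : ℝ) ^ ε * |u n| ≤ |u 1| := by
    intro n hn
    induction n, hn using Nat.le_induction with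
    | base => simp
    | succ n hn ih =>
      have hn' : (0 : ℝ) < n := by exact_mod_cast hn
      calc ((n + 1 : ℕ) : ℝ) ^ ε * |u (n + 1)| ≤ (n + 1 : ℝ) ^ ε * (|u n| * (n / (n + δ))) := by
            push_cast; gcongr; exact hu n hn
        _ = (n + 1 : ℝ) ^ ε * (n / (n + δ)) * |u n| := by ring
        _ ≤ (n : ℝ) ^ ε * |u n| := by
            gcongr
            exact rpow_succ_mul_div_add_le hn' hε.le (min_le_right _ _) (min_le_left _ _)
        _ ≤ |u 1| := ih
  have hdecay : Tendsto (fun n : ℕ => |u 1| * (n : ℝ) ^ (-ε)) atTop (𝓝 0) := by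
    simpa using ((tendsto_rpow_neg_atTop hε).comp tendsto_natCast_atTop_atTop).const_mul |u 1|
  refine squeeze_zero_norm' ?_ hdecay
  filter_upwards [eventually_ge_atTop 1] with n hn
  have hpow : 0 < (n : ℝ) ^ ε := Real.rpow_pos_of_pos (by exact_mod_cast hn) ε
  rw [Real.norm_eq_abs, Real.rpow_neg (Nat.cast_nonneg n), ← div_eq_mul_inv, le_div_iff₀ hpow, mul_comm]
  exact hbound n hn

theorem stmt_5_general (p q : ℝ) (hp : 0 < p) (hp1 : p < 1) (hq : 0 < q) (hq1 : q < 1)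
    (pM pm : ℕ → ℝ)
    (hpM : ∀ n : ℕ, pM n =
      (p * (1 - q) * n + p * q) / (1 - p - q + 2 * p * q + p * (1 - q) * n))
    (hpm : ∀ n : ℕ, pm n =
      (p * (1 - q) * n + p * q - p - q + 1) / (1 - p - q + 2 * p * q + p * (1 - q) * n))
    (pin : ℕ → ℝ)
    (hrec : ∀ n, 1 ≤ n → pin (n + 1) = pin n * pM n + (1 - pin n) * (1 - pm n)) :
    Filter.Tendsto pin Filter.atTop (nhds (p * q / (1 - p - q + 2 * p * q))) := by
  set c := 1 - p - q + 2 * p * q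
  set a := p * (1 - q)
  have hc : 0 < c := by nlinarith [mul_pos (sub_pos.2 hp1) (sub_pos.2 hq1), mul_pos hp hq]
  have ha : 0 < a := mul_pos hp (sub_pos.2 hq1)
  have hstep : ∀ n, 1 ≤ n →
      pin (n + 1) - p * q / c = (pin n - p * q / c) * (n / (n + c / a)) := by
    intro n hn
    have hD : 0 < c + a * n := by positivity
    rw [hrec n hn, hpM n, hpm n]
    field_simp
    ring
  have hconv := tendsto_zero_of_abs_succ_le_mul_div_add (div_pos hc ha)
    (u := fun n => pin n - p * q / c) fun n hn => by
      rw [hstep n hn, abs_mul, abs_of_nonneg (by positivity : (0 : ℝ) ≤ n / (n + c / a))]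
  simpa using hconv.add_const (p * q / c)

theorem stmt_5 (p q : ℝ) (hp : 0 < p) (hp1 : p < 1) (hq : 0 < q) (hq1 : q < 1)
    (pM pm : ℕ → ℝ)
    (hpM : ∀ n : ℕ, pM n =
      (p * (1 - q) * n + p * q) / (1 - p - q + 2 * p * q + p * (1 - q) * n))
    (hpm : ∀ n : ℕ, pm n =
      (p * (1 - q) * n + p * q - p - q + 1) / (1 - p - q + 2 * p * q + p * (1 - q) * n))
    (pin : ℕ → ℝ) (h0 : 0 ≤ pin 1) (h1 : pin 1 ≤ 1)
    (hrec : ∀ n, 1 ≤ n → pin (n + 1) = pin n * pM n + (1 - pin n) * (1 - pm n)) :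
    Filter.Tendsto pin Filter.atTop (nhds (p * q / (1 - p - q + 2 * p * q))) :=
  stmt_5_general p q hp hp1 hq hq1 pM pm hpM hpm pin hrec
end

section
/- Let (X_n) be the finite-memory perturbed walk on ℤ with L ≥ 1 and p + q = 1, p, q ∈ (0,1). Then (X_n) is recurrent: almost surely there exists k ∈ ℤ visited infinitely often, and in fact X_n = X_0 for infinitely many n almost surely. The proof structure: by the flip symmetry, P(X_n → +∞) = P(X_n → -∞); the event {X_n → +∞} is a tail event, so by a zero-one law these probabilities are each 0 or 1, hence both 0; thus some level is visited infinitely often, and from any level the walk returns to the start with probability bounded below. -/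
open scoped Classical
open MeasureTheory Filter

/-- `h n` is an `L`-step local maximum of the trajectory `h` at time `n`. -/
def LocMaxAt (L : ℕ) (h : ℕ → ℤ) (n : ℕ) : Prop := ∀ m, m ≤ min L n → h (n - m) ≤ h n

/-- `h n` is an `L`-step local minimum of the trajectory `h` at time `n`. -/
def LocMinAt (L : ℕ) (h : ℕ → ℤ) (n : ℕ) : Prop := ∀ m, m ≤ min L n → h n ≤ h (n - m)

/-- Probability that the perturbed walk steps `+1` at time `n` given past trajectory `h`:
`p` at an `L`-step local maximum, `q` at an `L`-step local minimum, `½` otherwise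
(and `½` if it is both a maximum and a minimum). -/
noncomputable def stepPr (L : ℕ) (p q : ℝ) (h : ℕ → ℤ) (n : ℕ) : ℝ :=
  if LocMaxAt L h n ∧ LocMinAt L h n then 1 / 2
  else if LocMaxAt L h n then p
  else if LocMinAt L h n then q
  else 1 / 2

/-!
The last `L` increments of the walk form a finite irreducible Markov chain on windows
`Fin L → Bool`, whose up-probability `s` satisfies `s (!w) = 1 - s w` when `q = 1 - p`. The drift
`2 s - 1` is therefore antisymmetric under the flip, and the Poisson equation `g - P g = 2 s - 1`
can be solved among antisymmetric functions: there `I - P` is injective, since a harmonic function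
is constant by the maximum principle and an antisymmetric constant vanishes. Then
`X (L + k) - X 0 + g (window k)` is a martingale with bounded increments, so almost surely it, and
hence the walk, is bounded on both sides or on neither.

A walk bounded on both sides is impossible: every step goes up with probability at least
`c = min (min p q) ½`, so by Lévy's conditional Borel–Cantelli lemma a level visited infinitely
often forces infinitely many visits to the level above. A nearest-neighbour walk unbounded on both
sides crosses `X 0` infinitely often.
-/

open Set

def IsNearestNeighbour (f : ℕ → ℤ) : Prop := ∀ n, f (n + 1) = f n + 1 ∨ f (n + 1) = f n - 1

namespace IsNearestNeighbour

variable {f : ℕ → ℤ}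

lemma neg (hf : IsNearestNeighbour f) : IsNearestNeighbour (-f) := fun n => by
  rcases hf n with h | h <;> simp [h] <;> omega

lemma abs_sub_le (hf : IsNearestNeighbour f) (n : ℕ) : |f n - f 0| ≤ n := by
  induction n with
  | zero => simp
  | succ n ih => rcases hf n with h | h <;> rw [abs_le] at * <;> push_cast <;> constructor <;> omega

lemma exists_eq_of_le_of_le (hf : IsNearestNeighbour f) {a b : ℕ} {t : ℤ} (hab : a ≤ b)
    (ha : f a ≤ t) (hb : t ≤ f b) : ∃ m, a ≤ m ∧ f m = t := by
  induction b, hab using Nat.le_induction with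
  | base => exact ⟨a, le_rfl, le_antisymm ha hb⟩
  | succ b hab ih =>
    by_cases hbt : t ≤ f b
    · exact ih hbt
    · exact ⟨b + 1, by omega, by rcases hf b with h | h <;> omega⟩

lemma infinite_setOf_eq (hf : IsNearestNeighbour f) (hup : ¬BddAbove (range f))
    (hdown : ¬BddBelow (range f)) (t : ℤ) : {n | f n = t}.Infinite := by
  rw [← Nat.frequently_atTop_iff_infinite, Filter.frequently_atTop]
  intro N
  obtain ⟨-, ⟨n₁, rfl⟩, h₁⟩ := not_bddAbove_iff.mp hup (max t (f 0 + N))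
  obtain ⟨-, ⟨n₂, rfl⟩, h₂⟩ := not_bddBelow_iff.mp hdown (min t (f 0 - N))
  have hn₁ := abs_le.mp (hf.abs_sub_le n₁)
  have hn₂ := abs_le.mp (hf.abs_sub_le n₂)
  rcases le_total n₁ n₂ with h | h
  · obtain ⟨m, hm, hmt⟩ := hf.neg.exists_eq_of_le_of_le (t := -t) h
      (by simp only [Pi.neg_apply]; omega) (by simp only [Pi.neg_apply]; omega)
    exact ⟨m, by omega, by simpa using hmt⟩
  · obtain ⟨m, hm, hmt⟩ := hf.exists_eq_of_le_of_le (t := t) h (by omega) (by omega)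
    exact ⟨m, by omega, hmt⟩

end IsNearestNeighbour

lemma not_bddAbove_range_of_infinite_setOf_eq_add_one {f : ℕ → ℤ}
    (hsucc : ∀ K, {n | f n = K}.Infinite → {n | f n = K + 1}.Infinite)
    (hbelow : BddBelow (range f)) : ¬BddAbove (range f) := by
  intro habove
  obtain ⟨K, hK⟩ : ∃ K, {n | f n = K}.Infinite := by
    by_contra! h
    have := (hbelow.finite_of_bddAbove habove).biUnion fun K _ => h K
    exact infinite_univ (this.subset fun n _ => mem_biUnion (mem_range_self n) rfl)
  have hK' : ∀ i : ℕ, {n | f n = K + i}.Infinite := by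
    intro i
    induction i with
    | zero => simpa using hK
    | succ i ih => simpa [add_assoc] using hsucc _ ih
  obtain ⟨B, hB⟩ := habove
  obtain ⟨n, hn : f n = _⟩ := (hK' (B - K + 1).toNat).nonempty
  have := hB (mem_range_self n)
  omega

lemma bddAbove_range_iff_of_abs_sub_le {f : ℕ → ℤ} {u : ℕ → ℝ} {C : ℝ} {L : ℕ}
    (h : ∀ k, |u k - f (L + k)| ≤ C) : BddAbove (range u) ↔ BddAbove (range f) := by
  constructor
  · rintro ⟨B, hB⟩
    obtain ⟨B', hB'⟩ := ((finite_Iio L).image f).bddAbove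
    refine ⟨max ⌈B + C⌉ B', ?_⟩
    rintro _ ⟨n, rfl⟩
    rcases lt_or_ge n L with hn | hn
    · exact le_max_of_le_right (hB' ⟨n, hn, rfl⟩)
    · obtain ⟨k, rfl⟩ := Nat.exists_eq_add_of_le hn
      have h₁ := hB (mem_range_self k)
      have h₂ := (abs_le.mp (h k)).1
      exact le_max_of_le_left (Int.le_ceil_iff.mpr (by linarith))
  · rintro ⟨B, hB⟩
    refine ⟨B + C, ?_⟩
    rintro _ ⟨k, rfl⟩
    have h₁ : (f (L + k) : ℝ) ≤ B := by exact_mod_cast hB (mem_range_self _)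
    linarith [(abs_le.mp (h k)).2]

lemma bddBelow_range_iff_of_abs_sub_le {f : ℕ → ℤ} {u : ℕ → ℝ} {C : ℝ} {L : ℕ}
    (h : ∀ k, |u k - f (L + k)| ≤ C) : BddBelow (range u) ↔ BddBelow (range f) := by
  have := bddAbove_range_iff_of_abs_sub_le (f := -f) (u := -u) (C := C) (L := L)
    (fun k => by simpa [abs_sub_comm, neg_add_eq_sub] using h k)
  rwa [← neg_range', ← neg_range', bddAbove_neg, bddAbove_neg] at this

lemma tendsto_sum_range_atTop_of_infinite {u : ℕ → ℝ} (hu : ∀ k, 0 ≤ u k) {c : ℝ} (hc : 0 < c)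
    (hinf : {k | c ≤ u k}.Infinite) : Tendsto (fun n => ∑ k ∈ Finset.range n, u k) atTop atTop := by
  refine (not_summable_iff_tendsto_nat_atTop_of_nonneg hu).mp fun hsum => ?_
  obtain ⟨k, hlt, hle⟩ := ((hsum.tendsto_atTop_zero.eventually (gt_mem_nhds hc)).and_frequently
    (Nat.frequently_atTop_iff_infinite.mpr hinf)).exists
  exact (not_le.mpr hlt) hle

section StepPr

variable {L : ℕ} {p q : ℝ} {h h' : ℕ → ℤ} {n n' : ℕ}

lemma locMaxAt_neg : LocMaxAt L (-h) n ↔ LocMinAt L h n :=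
  forall₂_congr fun _ _ => neg_le_neg_iff

lemma locMinAt_neg : LocMinAt L (-h) n ↔ LocMaxAt L h n :=
  forall₂_congr fun _ _ => neg_le_neg_iff

lemma stepPr_neg : stepPr L p q (-h) n = stepPr L q p h n := by
  unfold stepPr
  rw [locMaxAt_neg, locMinAt_neg]
  split_ifs <;> tauto

lemma stepPr_swap (hpq : q = 1 - p) : stepPr L q p h n = 1 - stepPr L p q h n := by
  unfold stepPr
  split_ifs <;> linarith

lemma stepPr_mem {S : Set ℝ} (hp : p ∈ S) (hq : q ∈ S) (hhalf : 1 / 2 ∈ S) :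
    stepPr L p q h n ∈ S := by
  unfold stepPr
  split_ifs <;> assumption

lemma stepPr_mem_Icc (hp : p ≤ 1) (hq : q ≤ 1) :
    stepPr L p q h n ∈ Icc (min (min p q) (1 / 2)) 1 :=
  stepPr_mem ⟨(min_le_left _ _).trans (min_le_left _ _), hp⟩
    ⟨(min_le_left _ _).trans (min_le_right _ _), hq⟩ ⟨min_le_right _ _, by norm_num⟩

lemma stepPr_congr (hmin : min L n = min L n')
    (hd : ∀ m ≤ min L n, h (n - m) - h n = h' (n' - m) - h' n') :
    stepPr L p q h n = stepPr L p q h' n' := by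
  have hmax : LocMaxAt L h n ↔ LocMaxAt L h' n' := by
    simp only [LocMaxAt, ← hmin]
    exact forall₂_congr fun m hm => by have := hd m hm; omega
  have hmin' : LocMinAt L h n ↔ LocMinAt L h' n' := by
    simp only [LocMinAt, ← hmin]
    exact forall₂_congr fun m hm => by have := hd m hm; omega
  unfold stepPr
  rw [hmax, hmin']

end StepPr

section Window

variable {L : ℕ}

def boolSign (b : Bool) : ℤ := if b then 1 else -1

def upBit (h : ℕ → ℤ) (i : ℕ) : Bool := decide (h (i + 1) = h i + 1)

def incrWindow (L : ℕ) (h : ℕ → ℤ) (k : ℕ) : Fin L → Bool := fun i => upBit h (k + i)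

def pushWindow (w : Fin L → Bool) (b : Bool) : Fin L → Bool :=
  fun i => if hi : (i : ℕ) + 1 < L then w ⟨i + 1, hi⟩ else b

def windowPath (w : Fin L → Bool) (j : ℕ) : ℤ :=
  ∑ i ∈ Finset.range j, if hi : i < L then boolSign (w ⟨i, hi⟩) else 0

lemma boolSign_upBit {h : ℕ → ℤ} (hh : IsNearestNeighbour h) (i : ℕ) :
    boolSign (upBit h i) = h (i + 1) - h i := by
  rcases hh i with h' | h' <;> simp [boolSign, upBit, h']; omega

lemma upBit_sum_boolSign (b : ℕ → Bool) (i : ℕ) :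
    upBit (fun j => ∑ l ∈ Finset.range j, boolSign (b l)) i = b i := by
  cases hb : b i <;> simp [upBit, Finset.sum_range_succ, boolSign, hb]

lemma incrWindow_succ (h : ℕ → ℤ) (k : ℕ) :
    incrWindow L h (k + 1) = pushWindow (incrWindow L h k) (upBit h (L + k)) := by
  funext i
  simp only [incrWindow, pushWindow]
  split_ifs with hi
  · congr 1; omega
  · congr 1; omega

lemma windowPath_incrWindow {h : ℕ → ℤ} (hh : IsNearestNeighbour h) (k : ℕ) {j : ℕ}
    (hj : j ≤ L) : windowPath (incrWindow L h k) j = h (k + j) - h k := by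
  induction j with
  | zero => simp [windowPath]
  | succ j ih =>
    rw [windowPath, Finset.sum_range_succ, ← windowPath, ih (by omega), dif_pos (by omega),
      incrWindow, boolSign_upBit hh]
    ring_nf

lemma windowPath_flip (w : Fin L → Bool) : windowPath (fun i => !w i) = -windowPath w := by
  funext j
  simp only [windowPath, Pi.neg_apply, ← Finset.sum_neg_distrib]
  refine Finset.sum_congr rfl fun i _ => ?_
  split_ifs with hi
  · cases w ⟨i, hi⟩ <;> simp [boolSign]
  · simp

lemma pushWindow_flip (w : Fin L → Bool) (b : Bool) :
    pushWindow (fun i => !w i) b = fun i => !pushWindow w (!b) i := by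
  funext i
  simp only [pushWindow]
  split_ifs <;> simp

lemma mem_of_forall_pushWindow_mem {T : Set (Fin L → Bool)} {w : Fin L → Bool} (hw : w ∈ T)
    (hT : ∀ v ∈ T, ∀ b, pushWindow v b ∈ T) (u : Fin L → Bool) : u ∈ T := by
  -- the windows of a path whose increments spell `w` and then `u`
  let b : ℕ → Bool := fun j =>
    if hj : j < L then w ⟨j, hj⟩ else if hj' : j - L < L then u ⟨j - L, hj'⟩ else false
  let h : ℕ → ℤ := fun j => ∑ l ∈ Finset.range j, boolSign (b l)
  have hwin : ∀ k, incrWindow L h k = fun i : Fin L => b (k + i) := fun k => by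
    funext i; exact upBit_sum_boolSign b _
  have hmem : ∀ k, incrWindow L h k ∈ T := by
    intro k
    induction k with
    | zero => convert hw using 1; funext i; simp [hwin 0, b]
    | succ k ih => rw [incrWindow_succ]; exact hT _ ih _
  convert hmem L using 1
  funext i
  simp [hwin L, b]

noncomputable def windowStepPr (L : ℕ) (p q : ℝ) (w : Fin L → Bool) : ℝ :=
  stepPr L p q (windowPath w) L

lemma stepPr_eq_windowStepPr {p q : ℝ} {h : ℕ → ℤ} (hh : IsNearestNeighbour h) (k : ℕ) :
    stepPr L p q h (L + k) = windowStepPr L p q (incrWindow L h k) := by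
  refine stepPr_congr (by omega) fun m hm => ?_
  rw [windowPath_incrWindow hh k (by omega), windowPath_incrWindow hh k le_rfl,
    show L + k - m = k + (L - m) by omega, add_comm L k]
  ring

lemma windowStepPr_flip {p q : ℝ} (hpq : q = 1 - p) (w : Fin L → Bool) :
    windowStepPr L p q (fun i => !w i) = 1 - windowStepPr L p q w := by
  rw [windowStepPr, windowPath_flip, stepPr_neg, stepPr_swap hpq, windowStepPr]

end Window

section Poisson

variable {S : Type*} (push : S → Bool → S) (s : S → ℝ)

def binaryTransition : (S → ℝ) →ₗ[ℝ] (S → ℝ) where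
  toFun φ x := s x * φ (push x true) + (1 - s x) * φ (push x false)
  map_add' φ ψ := by funext x; simp only [Pi.add_apply]; ring
  map_smul' c φ := by funext x; simp only [Pi.smul_apply, smul_eq_mul, RingHom.id_apply]; ring

def antisymmSubmodule (flip : S → S) : Submodule ℝ (S → ℝ) where
  carrier := {φ | ∀ x, φ (flip x) = -φ x}
  add_mem' hφ hψ x := by simp [hφ x, hψ x]; ring
  zero_mem' x := by simp
  smul_mem' c φ hφ x := by simp [hφ x]

variable {push s}

@[simp]
lemma binaryTransition_apply (φ : S → ℝ) (x : S) :
    binaryTransition push s φ x = s x * φ (push x true) + (1 - s x) * φ (push x false) := rfl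

lemma eq_const_of_isMaxOn_of_binaryTransition_eq {φ : S → ℝ} (hs : ∀ x, s x ∈ Ioo 0 1)
    (hirr : ∀ T : Set S, ∀ x ∈ T, (∀ y ∈ T, ∀ b, push y b ∈ T) → ∀ y, y ∈ T)
    (hφ : binaryTransition push s φ = φ) {x₀ : S} (hx₀ : IsMaxOn φ univ x₀) (y : S) :
    φ y = φ x₀ := by
  refine hirr {x | φ x = φ x₀} x₀ rfl (fun x hx b => ?_) y
  have hx' : s x * φ (push x true) + (1 - s x) * φ (push x false) = φ x₀ := by
    rw [← hx]; exact congrFun hφ x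
  have h₁ : φ (push x true) ≤ φ x₀ := hx₀ (mem_univ _)
  have h₂ : φ (push x false) ≤ φ x₀ := hx₀ (mem_univ _)
  obtain ⟨hs₀, hs₁⟩ := hs x
  cases b
  · show φ (push x false) = φ x₀; nlinarith
  · show φ (push x true) = φ x₀; nlinarith

variable {flip : S → S}

lemma binaryTransition_mem_antisymmSubmodule (hs_flip : ∀ x, s (flip x) = 1 - s x)
    (hpush_flip : ∀ x b, push (flip x) b = flip (push x !b)) {φ : S → ℝ}
    (hφ : φ ∈ antisymmSubmodule flip) : binaryTransition push s φ ∈ antisymmSubmodule flip := by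
  intro x
  simp only [binaryTransition, LinearMap.coe_mk, AddHom.coe_mk, hs_flip, hpush_flip,
    Bool.not_true, Bool.not_false, hφ _]
  ring

theorem exists_binaryTransition_poisson [Finite S] (hs : ∀ x, s x ∈ Ioo 0 1)
    (hs_flip : ∀ x, s (flip x) = 1 - s x) (hpush_flip : ∀ x b, push (flip x) b = flip (push x !b))
    (hirr : ∀ T : Set S, ∀ x ∈ T, (∀ y ∈ T, ∀ b, push y b ∈ T) → ∀ y, y ∈ T)
    {f : S → ℝ} (hf : ∀ x, f (flip x) = -f x) :
    ∃ g : S → ℝ, ∀ x, f x + binaryTransition push s g x = g x := by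
  let V := antisymmSubmodule (S := S) flip
  let T : V →ₗ[ℝ] V := LinearMap.id -
    (binaryTransition push s).restrict fun φ hφ =>
      binaryTransition_mem_antisymmSubmodule hs_flip hpush_flip hφ
  have hinj : Function.Injective T := by
    rw [← LinearMap.ker_eq_bot, LinearMap.ker_eq_bot']
    intro φ hφ
    have hharm : binaryTransition push s φ = φ :=
      (sub_eq_zero.mp (by simpa [T] using congrArg Subtype.val hφ)).symm
    ext y
    have : Nonempty S := ⟨y⟩
    obtain ⟨x₀, hx₀⟩ := Finite.exists_max (φ : S → ℝ)
    have hconst := eq_const_of_isMaxOn_of_binaryTransition_eq hs hirr hharm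
      (fun y _ => hx₀ y)
    have hzero : (φ : S → ℝ) x₀ = 0 := by
      have := φ.2 x₀
      rw [hconst] at this
      linarith
    simp [hconst y, hzero]
  obtain ⟨g, hg⟩ := (LinearMap.injective_iff_surjective.mp hinj) ⟨f, hf⟩
  refine ⟨g, fun x => ?_⟩
  have := congrFun (congrArg Subtype.val hg) x
  simp only [T, LinearMap.sub_apply, LinearMap.id_apply, Submodule.coe_sub,
    LinearMap.coe_restrict_apply, Pi.sub_apply] at this
  linarith

end Poisson

def IsWindowCorrector (L : ℕ) (p q : ℝ) (g : (Fin L → Bool) → ℝ) : Prop :=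
  ∀ w, (2 * windowStepPr L p q w - 1) + binaryTransition pushWindow (windowStepPr L p q) g w = g w

lemma exists_isWindowCorrector {L : ℕ} {p q : ℝ} (hp : p ∈ Ioo 0 1) (hq : q ∈ Ioo 0 1)
    (hpq : q = 1 - p) : ∃ g, IsWindowCorrector L p q g :=
  exists_binaryTransition_poisson (fun _ => stepPr_mem hp hq (by norm_num))
    (windowStepPr_flip hpq) pushWindow_flip
    (fun _ _ hw hT u => mem_of_forall_pushWindow_mem hw hT u)
    (fun w => by rw [windowStepPr_flip hpq]; ring)

section CountableFibers

variable {Ω β : Type*} {m0 : MeasurableSpace Ω} {μ : Measure Ω} {F : Ω → β}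

lemma comap_top_le_of_countable_range (hc : (range F).Countable)
    (hF : ∀ ω, MeasurableSet (F ⁻¹' {F ω})) : MeasurableSpace.comap F ⊤ ≤ m0 := by
  rintro _ ⟨S, -, rfl⟩
  rw [← preimage_inter_range, ← biUnion_preimage_singleton]
  exact .biUnion (hc.mono inter_subset_right) fun _ ⟨_, ω, hω⟩ => hω ▸ hF ω

lemma setIntegral_eq_of_forall_fiber (hc : (range F).Countable)
    (hF : ∀ ω, MeasurableSet (F ⁻¹' {F ω})) {f g : Ω → ℝ} (hf : Integrable f μ)
    (hg : Integrable g μ) (hfg : ∀ ω, ∫ x in F ⁻¹' {F ω}, g x ∂μ = ∫ x in F ⁻¹' {F ω}, f x ∂μ)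
    {A : Set Ω} (hA : MeasurableSet[MeasurableSpace.comap F ⊤] A) :
    ∫ x in A, g x ∂μ = ∫ x in A, f x ∂μ := by
  obtain ⟨S, -, rfl⟩ := hA
  have : Countable ↥(S ∩ range F) := (hc.mono inter_subset_right).to_subtype
  have hU : F ⁻¹' S = ⋃ b : ↥(S ∩ range F), F ⁻¹' {(b : β)} := by
    rw [← preimage_inter_range, ← biUnion_preimage_singleton, biUnion_eq_iUnion]
  have hm : ∀ b : ↥(S ∩ range F), MeasurableSet (F ⁻¹' {(b : β)}) :=
    fun ⟨_, _, ω, hω⟩ => hω ▸ hF ω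
  have hd : Pairwise (Function.onFun Disjoint fun b : ↥(S ∩ range F) => F ⁻¹' {(b : β)}) :=
    fun b b' hne => (disjoint_singleton.mpr (Subtype.coe_injective.ne hne)).preimage F
  rw [hU, ← (hasSum_integral_iUnion hm hd hg.integrableOn).tsum_eq,
    ← (hasSum_integral_iUnion hm hd hf.integrableOn).tsum_eq]
  congr 1
  funext ⟨_, _, ω, hω⟩
  subst hω
  exact hfg ω

theorem ae_eq_condExp_comap_of_forall_fiber [IsFiniteMeasure μ] (hc : (range F).Countable)
    (hF : ∀ ω, MeasurableSet (F ⁻¹' {F ω})) {f g : Ω → ℝ} (hf : Integrable f μ)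
    (hg : Integrable g μ) (hgm : StronglyMeasurable[MeasurableSpace.comap F ⊤] g)
    (hfg : ∀ ω, ∫ x in F ⁻¹' {F ω}, g x ∂μ = ∫ x in F ⁻¹' {F ω}, f x ∂μ) :
    g =ᵐ[μ] μ[f | MeasurableSpace.comap F ⊤] :=
  ae_eq_condExp_of_forall_setIntegral_eq (comap_top_le_of_countable_range hc hF) hf
    (fun _ _ _ => hg.integrableOn)
    (fun _ hA _ => setIntegral_eq_of_forall_fiber hc hF hf hg hfg hA) hgm.aestronglyMeasurable

end CountableFibers

section HistoryDependentWalk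

variable {Ω : Type*} {m0 : MeasurableSpace Ω} {μ : Measure Ω} {X : ℕ → Ω → ℤ}

def HasUpStepProb (μ : Measure Ω) (X : ℕ → Ω → ℤ) (s : (ℕ → ℤ) → ℕ → ℝ) : Prop :=
  ∀ (n : ℕ) (h : ℕ → ℤ), μ {ω | X (n + 1) ω = h n + 1 ∧ ∀ k ≤ n, X k ω = h k}
    = ENNReal.ofReal (s h n) * μ {ω | ∀ k ≤ n, X k ω = h k}

def stoppedPath (X : ℕ → Ω → ℤ) (n : ℕ) (ω : Ω) : ℕ → ℤ := fun j => X (min j n) ω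

lemma preimage_stoppedPath_singleton (n : ℕ) (ω₀ : Ω) :
    stoppedPath X n ⁻¹' {stoppedPath X n ω₀} = {ω | ∀ k ≤ n, X k ω = stoppedPath X n ω₀ k} := by
  ext ω
  simp only [mem_preimage, mem_singleton_iff, funext_iff, stoppedPath, mem_ofPred_eq]
  refine ⟨fun h k hk => ?_, fun h j => ?_⟩
  · rw [← h k, min_eq_left hk]
  · rw [h _ (min_le_right j n), min_eq_left (min_le_right j n)]

lemma countable_range_stoppedPath (n : ℕ) : (range (stoppedPath X n)).Countable :=
  (countable_range fun v : Fin (n + 1) → ℤ => fun j => v ⟨min j n, by omega⟩).mono <| by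
    rintro _ ⟨ω, rfl⟩
    exact ⟨fun i => X i ω, rfl⟩

lemma measurableSet_preimage_stoppedPath (hX : ∀ n, Measurable (X n)) (n : ℕ) (ω₀ : Ω) :
    MeasurableSet (stoppedPath X n ⁻¹' {stoppedPath X n ω₀}) := by
  rw [preimage_stoppedPath_singleton]
  exact measurableSet_setOfPred.mpr <| .forall fun k => .imp measurable_const <|
    measurableSet_setOfPred.mp (hX k (measurableSet_singleton _))

/-- The natural filtration of `X`; as `X` is integer-valued, any set of paths may be pulled back. -/
def pathFiltration (hX : ∀ n, Measurable (X n)) : Filtration ℕ m0 where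
  seq n := MeasurableSpace.comap (stoppedPath X n) ⊤
  mono' n n' hn := MeasurableSpace.comap_le_comap_of_eq_comp (fun h j => h (min j n))
    (fun _ _ => MeasurableSpace.measurableSet_top) <| by
      funext ω j
      simp only [stoppedPath, Function.comp_apply, min_assoc, min_eq_left hn]
  le' n := comap_top_le_of_countable_range (countable_range_stoppedPath n)
    (measurableSet_preimage_stoppedPath hX n)

lemma measurable_pathFiltration {β : Type*} [MeasurableSpace β] (hX : ∀ n, Measurable (X n))
    {n : ℕ} {Φ : (ℕ → ℤ) → β} (hΦ : ∀ h, Φ (fun j => h (min j n)) = Φ h) :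
    Measurable[pathFiltration hX n] fun ω => Φ (fun j => X j ω) := by
  have : (fun ω => Φ (fun j => X j ω)) = Φ ∘ stoppedPath X n := by
    funext ω; exact (hΦ _).symm
  rw [this]
  exact measurable_from_top.comp (comap_measurable _)

lemma measurableSet_pathFiltration_eq (hX : ∀ n, Measurable (X n)) (n : ℕ) (K : ℤ) :
    MeasurableSet[pathFiltration hX n] {ω | X n ω = K} :=
  measurable_pathFiltration hX (Φ := fun h => h n) (fun h => by simp) (measurableSet_singleton K)

lemma measurableSet_upStep (hX : ∀ n, Measurable (X n)) (n : ℕ) :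
    MeasurableSet {ω | X (n + 1) ω = X n ω + 1} :=
  measurableSet_eq_fun (hX _) ((hX n).add_const 1)

variable {s : (ℕ → ℤ) → ℕ → ℝ}

lemma HasUpStepProb.measureReal_upStep_inter (hmc : HasUpStepProb μ X s)
    (hs : ∀ h n, 0 ≤ s h n) (n : ℕ) (ω₀ : Ω) :
    μ.real ({ω | X (n + 1) ω = X n ω + 1} ∩ stoppedPath X n ⁻¹' {stoppedPath X n ω₀})
      = s (stoppedPath X n ω₀) n * μ.real (stoppedPath X n ⁻¹' {stoppedPath X n ω₀}) := by
  set h := stoppedPath X n ω₀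
  have hup : {ω | X (n + 1) ω = X n ω + 1} ∩ stoppedPath X n ⁻¹' {h}
      = {ω | X (n + 1) ω = h n + 1 ∧ ∀ k ≤ n, X k ω = h k} := by
    rw [preimage_stoppedPath_singleton]
    ext ω
    simp only [mem_inter_iff, mem_ofPred_eq]
    exact ⟨fun ⟨hω, hk⟩ => ⟨by rw [hω, hk n le_rfl], hk⟩,
      fun ⟨hω, hk⟩ => ⟨by rw [hω, hk n le_rfl], hk⟩⟩
  rw [hup, preimage_stoppedPath_singleton, measureReal_def, measureReal_def, hmc n h,
    ENNReal.toReal_mul, ENNReal.toReal_ofReal (hs h n)]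

theorem HasUpStepProb.condExp_indicator_upStep [IsFiniteMeasure μ] (hX : ∀ n, Measurable (X n))
    (hmc : HasUpStepProb μ X s) (hs : ∀ h n, s h n ∈ Icc 0 1) (n : ℕ) :
    (fun ω => s (stoppedPath X n ω) n)
      =ᵐ[μ] μ[{ω | X (n + 1) ω = X n ω + 1}.indicator 1 | pathFiltration hX n] := by
  have hm : StronglyMeasurable[pathFiltration hX n] fun ω => s (stoppedPath X n ω) n :=
    (measurable_from_top.comp (comap_measurable (stoppedPath X n)) :
      Measurable[pathFiltration hX n] ((fun h => s h n) ∘ stoppedPath X n)).stronglyMeasurable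
  refine ae_eq_condExp_comap_of_forall_fiber (countable_range_stoppedPath n)
    (measurableSet_preimage_stoppedPath hX n)
    ((integrable_const 1).indicator (measurableSet_upStep hX n))
    ((integrable_const (1 : ℝ)).mono' (hm.mono ((pathFiltration hX).le n)).aestronglyMeasurable
      (ae_of_all _ fun ω => by
        simpa [abs_of_nonneg (hs _ n).1] using (hs (stoppedPath X n ω) n).2)) hm fun ω₀ => ?_
  rw [setIntegral_congr_fun (measurableSet_preimage_stoppedPath hX n ω₀)
      (fun ω (hω : _ = _) => by rw [hω]), setIntegral_const,
    integral_indicator_one (measurableSet_upStep hX n), measureReal_restrict_apply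
      (measurableSet_upStep hX n), hmc.measureReal_upStep_inter (fun h n => (hs h n).1),
    smul_eq_mul, mul_comm]

lemma HasUpStepProb.indicator_le_condExp [IsFiniteMeasure μ] (hX : ∀ n, Measurable (X n))
    (hmc : HasUpStepProb μ X s) {c : ℝ} (hc : 0 ≤ c) (hs : ∀ h n, s h n ∈ Icc c 1) (k : ℕ)
    (K : ℤ) :
    (fun ω => c * {ω | X k ω = K}.indicator 1 ω)
      ≤ᵐ[μ] μ[{ω | X (k + 1) ω = K + 1}.indicator 1 | pathFiltration hX k] := by
  set A := {ω | X k ω = K}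
  set U := {ω | X (k + 1) ω = X k ω + 1}
  have hA := measurableSet_pathFiltration_eq hX k K
  have hA' : MeasurableSet A := (pathFiltration hX).le k _ hA
  have hU := measurableSet_upStep hX k
  have hind : ∀ {t : Set Ω}, MeasurableSet t → Integrable (t.indicator (1 : Ω → ℝ)) μ :=
    fun ht => (integrable_const 1).indicator ht
  have hAU : A ∩ U ⊆ {ω | X (k + 1) ω = K + 1} := fun ω ⟨hωA, hωU⟩ => by
    simp only [A, U, mem_ofPred_eq] at hωA hωU ⊢
    rw [hωU, hωA]
  filter_upwards [condExp_mono (m := pathFiltration hX k) (hind (hA'.inter hU))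
      (hind (hX (k + 1) (measurableSet_singleton (K + 1))))
      (ae_of_all _ (indicator_le_indicator_of_subset hAU fun _ => zero_le_one)),
    condExp_mul_of_stronglyMeasurable_left (f := A.indicator (1 : Ω → ℝ))
      (stronglyMeasurable_const.indicator hA)
      (by rw [← inter_indicator_one]; exact hind (hA'.inter hU)) (hind hU),
    hmc.condExp_indicator_upStep hX (fun h n => ⟨hc.trans (hs h n).1, (hs h n).2⟩) k]
    with ω hmono hpull hup
  rw [inter_indicator_one] at hmono
  calc c * A.indicator 1 ω ≤ A.indicator 1 ω * s (stoppedPath X k ω) k := by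
        by_cases hω : ω ∈ A <;> simp [hω, (hs _ k).1]
    _ = μ[A.indicator 1 * U.indicator 1 | pathFiltration hX k] ω := by
        rw [hpull, Pi.mul_apply, hup]
    _ ≤ _ := hmono

theorem HasUpStepProb.ae_infinite_setOf_eq_add_one [IsFiniteMeasure μ]
    (hX : ∀ n, Measurable (X n)) (hmc : HasUpStepProb μ X s) {c : ℝ} (hc : 0 < c)
    (hs : ∀ h n, s h n ∈ Icc c 1) :
    ∀ᵐ ω ∂μ, ∀ K : ℤ, {n | X n ω = K}.Infinite → {n | X n ω = K + 1}.Infinite := by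
  refine ae_all_iff.mpr fun K => ?_
  filter_upwards [ae_mem_limsup_atTop_iff μ (measurableSet_pathFiltration_eq hX · (K + 1)),
    ae_all_iff.mpr (hmc.indicator_le_condExp hX hc.le hs · K),
    ae_all_iff.mpr fun k => condExp_nonneg (m := pathFiltration hX k)
      (f := {ω | X (k + 1) ω = K + 1}.indicator (1 : Ω → ℝ))
      (ae_of_all μ (indicator_nonneg fun _ _ => zero_le_one))] with ω hlevy hlow hnonneg hK
  have hlim := hlevy.mpr (tendsto_sum_range_atTop_of_infinite hnonneg hc (hK.mono fun k hk => ?_))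
  · have : ∃ᶠ n in atTop, ω ∈ {ω | X n ω = K + 1} := mem_limsup_iff_frequently_mem.mp hlim
    exact Nat.frequently_atTop_iff_infinite.mp this
  simpa [show X k ω = K from hk] using hlow k

end HistoryDependentWalk

section CorrectedWalk

variable {Ω : Type*} {m0 : MeasurableSpace Ω} {μ : Measure Ω} {X : ℕ → Ω → ℤ} {L : ℕ}

def shiftedFiltration (ℱ : Filtration ℕ m0) (L : ℕ) : Filtration ℕ m0 where
  seq k := ℱ (L + k)
  mono' _ _ h := ℱ.mono (by omega)
  le' k := ℱ.le (L + k)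

lemma stepPr_stoppedPath {p q : ℝ} (n : ℕ) (ω : Ω) :
    stepPr L p q (stoppedPath X n ω) n = stepPr L p q (X · ω) n :=
  stepPr_congr rfl fun m _ => by simp only [stoppedPath, min_self, min_eq_left (Nat.sub_le n m)]

lemma incrWindow_min (h : ℕ → ℤ) (k : ℕ) :
    incrWindow L (fun j => h (min j (L + k))) k = incrWindow L h k := by
  funext i
  have hi := i.isLt
  simp only [incrWindow, upBit, min_eq_left (by omega : k + i + 1 ≤ L + k),
    min_eq_left (by omega : k + i ≤ L + k)]

def windowIncr (g : (Fin L → Bool) → ℝ) (w : Fin L → Bool) (e : Bool) : ℝ :=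
  boolSign e + g (pushWindow w e) - g w

lemma abs_windowIncr_le {g : (Fin L → Bool) → ℝ} {C : ℝ} (hC : ∀ w, |g w| ≤ C)
    (w : Fin L → Bool) (e : Bool) : |windowIncr g w e| ≤ 1 + 2 * C := by
  have h₁ := abs_le.mp (hC w)
  have h₂ := abs_le.mp (hC (pushWindow w e))
  rw [abs_le]
  cases e <;> simp only [windowIncr, boolSign] <;> push_cast <;> constructor <;> linarith

def correctedWalk (L : ℕ) (g : (Fin L → Bool) → ℝ) (X : ℕ → Ω → ℤ) (k : ℕ) (ω : Ω) : ℝ :=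
  ((X (L + k) ω - X 0 ω : ℤ) : ℝ) + g (incrWindow L (fun j => X j ω) k)

variable {g : (Fin L → Bool) → ℝ}

lemma correctedWalk_succ {ω : Ω} (hω : IsNearestNeighbour (X · ω)) (k : ℕ) :
    correctedWalk L g X (k + 1) ω = correctedWalk L g X k ω
      + windowIncr g (incrWindow L (X · ω) k) (upBit (X · ω) (L + k)) := by
  have hstep : ((X (L + k + 1) ω - X (L + k) ω : ℤ) : ℝ) = boolSign (upBit (X · ω) (L + k)) := by
    rw [boolSign_upBit hω]
  simp only [correctedWalk, windowIncr, incrWindow_succ, ← add_assoc]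
  push_cast at hstep ⊢
  linarith

lemma abs_correctedWalk_sub_le {C : ℝ} (hC : ∀ w, |g w| ≤ C) (k : ℕ) (ω : Ω) :
    |correctedWalk L g X k ω - X (L + k) ω| ≤ |(X 0 ω : ℝ)| + C := by
  have := hC (incrWindow L (X · ω) k)
  simp only [correctedWalk]
  push_cast
  calc _ = |-(X 0 ω : ℝ) + g (incrWindow L (X · ω) k)| := by ring_nf
    _ ≤ _ := (abs_add_le _ _).trans (by rw [abs_neg]; linarith)

lemma abs_correctedWalk_succ_sub_le {C : ℝ} (hC : ∀ w, |g w| ≤ C) {ω : Ω}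
    (hω : IsNearestNeighbour (X · ω)) (k : ℕ) :
    |correctedWalk L g X (k + 1) ω - correctedWalk L g X k ω| ≤ 1 + 2 * C := by
  rw [correctedWalk_succ hω, add_sub_cancel_left]
  exact abs_windowIncr_le hC _ _

lemma abs_correctedWalk_le {C : ℝ} (hC : ∀ w, |g w| ≤ C) {ω : Ω}
    (hω : IsNearestNeighbour (X · ω)) (k : ℕ) : |correctedWalk L g X k ω| ≤ L + k + C := by
  have h₁ : |((X (L + k) ω - X 0 ω : ℤ) : ℝ)| ≤ L + k := by
    exact_mod_cast hω.abs_sub_le (L + k)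
  exact (abs_add_le _ _).trans (add_le_add h₁ (hC _))

lemma measurable_comp_incrWindow {β : Type*} [MeasurableSpace β] (hX : ∀ n, Measurable (X n))
    (k : ℕ) (φ : (Fin L → Bool) → β) :
    Measurable[pathFiltration hX (L + k)] fun ω => φ (incrWindow L (X · ω) k) :=
  measurable_pathFiltration hX (Φ := fun h => φ (incrWindow L h k)) fun h => by
    rw [incrWindow_min]

lemma stronglyMeasurable_correctedWalk (hX : ∀ n, Measurable (X n)) (k : ℕ) :
    StronglyMeasurable[pathFiltration hX (L + k)] (correctedWalk L g X k) :=
  (measurable_pathFiltration hX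
    (Φ := fun h => ((h (L + k) - h 0 : ℤ) : ℝ) + g (incrWindow L h k))
    fun h => by simp only [min_self, Nat.zero_min, incrWindow_min]).stronglyMeasurable

lemma integrable_comp_incrWindow [IsFiniteMeasure μ] (hX : ∀ n, Measurable (X n)) (k : ℕ)
    (φ : (Fin L → Bool) → ℝ) : Integrable (fun ω => φ (incrWindow L (X · ω) k)) μ := by
  obtain ⟨C, hC⟩ := (finite_range fun w => ‖φ w‖).bddAbove
  exact .of_bound (((measurable_comp_incrWindow hX k φ).mono ((pathFiltration hX).le _)
    le_rfl).aestronglyMeasurable) C (ae_of_all _ fun ω => hC (mem_range_self _))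

lemma integrable_correctedWalk [IsFiniteMeasure μ] (hX : ∀ n, Measurable (X n))
    (hstep : ∀ᵐ ω ∂μ, IsNearestNeighbour (X · ω)) {C : ℝ} (hC : ∀ w, |g w| ≤ C) (k : ℕ) :
    Integrable (correctedWalk L g X k) μ :=
  .of_bound ((stronglyMeasurable_correctedWalk hX k).mono
    ((pathFiltration hX).le _)).aestronglyMeasurable (L + k + C)
    (by filter_upwards [hstep] with ω hω using abs_correctedWalk_le hC hω k)

variable [IsFiniteMeasure μ] {p q : ℝ} {C : ℝ}

lemma correctedWalk_ae_eq_condExp (hX : ∀ n, Measurable (X n))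
    (hstep : ∀ᵐ ω ∂μ, IsNearestNeighbour (X · ω)) (hmc : HasUpStepProb μ X (stepPr L p q))
    (hs : ∀ h n, stepPr L p q h n ∈ Icc 0 1) (hC : ∀ w, |g w| ≤ C)
    (hg : IsWindowCorrector L p q g) (k : ℕ) :
    correctedWalk L g X k =ᵐ[μ] μ[correctedWalk L g X (k + 1) | pathFiltration hX (L + k)] := by
  set n := L + k
  set U := {ω | X (n + 1) ω = X n ω + 1}
  -- a.s. `M (k + 1) = a + b 1_U` with `a`, `b` known at time `L + k`, and `U` of conditional
  -- probability `s`; the corrector equation is exactly `a + b s = M k`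
  let a : Ω → ℝ := fun ω =>
    correctedWalk L g X k ω + windowIncr g (incrWindow L (X · ω) k) false
  let b : Ω → ℝ := fun ω =>
    windowIncr g (incrWindow L (X · ω) k) true - windowIncr g (incrWindow L (X · ω) k) false
  have hU : Integrable (U.indicator (1 : Ω → ℝ)) μ :=
    (integrable_const 1).indicator (measurableSet_upStep hX n)
  have ha : StronglyMeasurable[pathFiltration hX n] a :=
    (stronglyMeasurable_correctedWalk hX k).add
      (measurable_comp_incrWindow hX k (windowIncr g · false)).stronglyMeasurable
  have ha' : Integrable a μ := (integrable_correctedWalk hX hstep hC k).add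
    (integrable_comp_incrWindow hX k (windowIncr g · false))
  have hb : StronglyMeasurable[pathFiltration hX n] b := (measurable_comp_incrWindow hX k
    fun w => windowIncr g w true - windowIncr g w false).stronglyMeasurable
  have hbU : Integrable (b * U.indicator 1) μ := by
    refine hU.bdd_mul (c := 2 * (1 + 2 * C))
      (hb.mono ((pathFiltration hX).le n)).aestronglyMeasurable (ae_of_all _ fun ω => ?_)
    rw [Real.norm_eq_abs]
    refine (abs_sub _ _).trans ?_
    linarith [abs_windowIncr_le hC (incrWindow L (X · ω) k) true,
      abs_windowIncr_le hC (incrWindow L (X · ω) k) false]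
  have hsplit : correctedWalk L g X (k + 1) =ᵐ[μ] a + b * U.indicator 1 := by
    filter_upwards [hstep] with ω hω
    rw [correctedWalk_succ hω]
    by_cases hωU : ω ∈ U
    · have : upBit (X · ω) (L + k) = true := decide_eq_true hωU
      simp [a, b, this, hωU]
    · have : upBit (X · ω) (L + k) = false := decide_eq_false hωU
      simp [a, b, this, hωU]
  filter_upwards [condExp_congr_ae (m := pathFiltration hX n) hsplit,
    condExp_add ha' hbU (pathFiltration hX n), condExp_mul_of_stronglyMeasurable_left hb hbU hU,
    hmc.condExp_indicator_upStep hX hs n, hstep] with ω h₁ h₂ h₃ h₄ hω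
  rw [h₁, h₂, Pi.add_apply, condExp_of_stronglyMeasurable ((pathFiltration hX).le n) ha ha', h₃,
    Pi.mul_apply, ← h₄, stepPr_stoppedPath, stepPr_eq_windowStepPr hω]
  have := hg (incrWindow L (X · ω) k)
  simp only [binaryTransition_apply] at this
  simp only [a, b, windowIncr, boolSign]
  push_cast
  linear_combination -this

theorem correctedWalk_martingale (hX : ∀ n, Measurable (X n))
    (hstep : ∀ᵐ ω ∂μ, IsNearestNeighbour (X · ω)) (hmc : HasUpStepProb μ X (stepPr L p q))
    (hs : ∀ h n, stepPr L p q h n ∈ Icc 0 1) (hC : ∀ w, |g w| ≤ C)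
    (hg : IsWindowCorrector L p q g) :
    Martingale (correctedWalk L g X) (shiftedFiltration (pathFiltration hX) L) μ :=
  martingale_nat (stronglyMeasurable_correctedWalk hX) (integrable_correctedWalk hX hstep hC)
    (correctedWalk_ae_eq_condExp hX hstep hmc hs hC hg)

end CorrectedWalk

theorem stmt_17_general (L : ℕ) (p q : ℝ)
    (hp : 0 < p) (hp1 : p < 1) (hq : 0 < q) (hq1 : q < 1) (hpq : q = 1 - p)
    (Ω : Type*) [MeasurableSpace Ω] (μ : Measure Ω) [IsProbabilityMeasure μ]
    (X : ℕ → Ω → ℤ) (hX : ∀ n, Measurable (X n))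
    -- nearest-neighbour steps:
    (hstep : ∀ᵐ ω ∂μ, ∀ n, X (n + 1) ω = X n ω + 1 ∨ X (n + 1) ω = X n ω - 1)
    -- Markov property: conditionally on any past trajectory the walk steps `+1`
    -- with the perturbed-at-extrema probability:
    (hmc : ∀ (n : ℕ) (h : ℕ → ℤ),
      μ {ω | X (n + 1) ω = h n + 1 ∧ ∀ k ≤ n, X k ω = h k}
        = ENNReal.ofReal (stepPr L p q h n) * μ {ω | ∀ k ≤ n, X k ω = h k}) :
    ∀ᵐ ω ∂μ, {n : ℕ | X n ω = X 0 ω}.Infinite := by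
  obtain ⟨g, hg⟩ := exists_isWindowCorrector (L := L) ⟨hp, hp1⟩ ⟨hq, hq1⟩ hpq
  obtain ⟨C, hC⟩ := (finite_range fun w => |g w|).bddAbove
  replace hC : ∀ w, |g w| ≤ C := fun w => hC (mem_range_self w)
  have hc : 0 < min (min p q) (1 / 2) := lt_min (lt_min hp hq) (by norm_num)
  have hs := fun h n => stepPr_mem_Icc (L := L) (h := h) (n := n) hp1.le hq1.le
  have hmart := correctedWalk_martingale hX hstep hmc
    (fun h n => ⟨hc.le.trans (hs h n).1, (hs h n).2⟩) hC hg
  have hincr : ∀ᵐ ω ∂μ, ∀ k, |correctedWalk L g X (k + 1) ω - correctedWalk L g X k ω|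
      ≤ (1 + 2 * C).toNNReal := by
    filter_upwards [hstep] with ω hω k
    exact (abs_correctedWalk_succ_sub_le hC hω k).trans (Real.le_coe_toNNReal _)
  filter_upwards [hmart.bddAbove_range_iff_bddBelow_range hincr,
    HasUpStepProb.ae_infinite_setOf_eq_add_one hX hmc hc hs, hstep]
    with ω hdich hvisit (hω : IsNearestNeighbour (X · ω))
  have hclose := (abs_correctedWalk_sub_le (X := X) hC · ω)
  rw [bddAbove_range_iff_of_abs_sub_le (f := (X · ω)) hclose,
    bddBelow_range_iff_of_abs_sub_le (f := (X · ω)) hclose] at hdich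
  have hunbdd : ¬BddAbove (range (X · ω)) := fun h =>
    not_bddAbove_range_of_infinite_setOf_eq_add_one hvisit (hdich.mp h) h
  exact hω.infinite_setOf_eq hunbdd (fun h => hunbdd (hdich.mpr h)) (X 0 ω)

theorem stmt_17 (L : ℕ) (hL : 1 ≤ L) (p q : ℝ)
    (hp : 0 < p) (hp1 : p < 1) (hq : 0 < q) (hq1 : q < 1) (hpq : q = 1 - p)
    (Ω : Type*) [MeasurableSpace Ω] (μ : Measure Ω) [IsProbabilityMeasure μ]
    (X : ℕ → Ω → ℤ) (hX : ∀ n, Measurable (X n))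
    -- nearest-neighbour steps:
    (hstep : ∀ᵐ ω ∂μ, ∀ n, X (n + 1) ω = X n ω + 1 ∨ X (n + 1) ω = X n ω - 1)
    -- Markov property: conditionally on any past trajectory the walk steps `+1`
    -- with the perturbed-at-extrema probability:
    (hmc : ∀ (n : ℕ) (h : ℕ → ℤ),
      μ {ω | X (n + 1) ω = h n + 1 ∧ ∀ k ≤ n, X k ω = h k}
        = ENNReal.ofReal (stepPr L p q h n) * μ {ω | ∀ k ≤ n, X k ω = h k}) :
    ∀ᵐ ω ∂μ, {n : ℕ | X n ω = X 0 ω}.Infinite :=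
  stmt_17_general L p q hp hp1 hq hq1 hpq Ω μ X hX hstep hmc
end
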